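/- Let A be a finite dimensional k-algebra, α a Hochschild 2-cocycle A⊗A → A*, T = T(A,α), and φ : T → T* a T-bimodule isomorphism with φ(1_T) = (h,c) ∈ A* ⊕ A ≅ T*. Then for all a,b ∈ A and f,g ∈ A*: α(a⊗b)(c) − α(b⊗a)(c) + h(ab − ba) = 0, f(bc) = f(cb), and g(ac) = g(ca). -/
import Mathlib


namespace HochschildExtension

variable (k : Type*) [Field k] (A : Type*) [Ring A] [Algebra k A]

/-- The underlying vector space `A ⊕ A*` of the Hochschild extension `T(A,α)`. -/
abbrev Ext : Type _ := A × Module.Dual k A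

/-- The Hochschild 2-cocycle condition for `α : A ⊗ A → A*`, written pointwise using the
dual bimodule structure `(c·f·a)(b) = f(abc)`, i.e. `(a·g)(x) = g(xa)`, `(f·b)(x) = f(bx)`. -/
def IsCocycle (α : A →ₗ[k] A →ₗ[k] Module.Dual k A) : Prop :=
  ∀ a b d x : A, α b d (x * a) - α (a * b) d x + α a (b * d) x - α a b (d * x) = 0

/-- The multiplication of the Hochschild extension `T(A,α)`:
`(a,f)(b,g) = (ab, a·g + f·b + α(a⊗b))`, where `(a·g)(x) = g(xa)` and `(f·b)(x) = f(bx)`. -/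
noncomputable def hmul (α : A →ₗ[k] A →ₗ[k] Module.Dual k A) (p q : Ext k A) : Ext k A :=
  (p.1 * q.1,
    q.2 ∘ₗ LinearMap.mulRight k p.1 + p.2 ∘ₗ LinearMap.mulLeft k q.1 + α p.1 q.1)

/-- The identity element `(1, -α(1⊗1))` of the Hochschild extension `T(A,α)`. -/
noncomputable def hone (α : A →ₗ[k] A →ₗ[k] Module.Dual k A) : Ext k A :=
  (1, -(α 1 1))

/-- `T(A,α)` is a symmetric algebra: there is a `k`-linear bijection
`φ : T(A,α) → T(A,α)*` which is a morphism of `T(A,α)`-bimodules, where `T(A,α)*`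
carries the canonical bimodule structure `(t·ξ·s)(u) = ξ(sut)`. -/
noncomputable def IsSymmetric (α : A →ₗ[k] A →ₗ[k] Module.Dual k A) : Prop :=
  ∃ φ : Ext k A ≃ₗ[k] Module.Dual k (Ext k A),
    ∀ x y u : Ext k A,
      φ (hmul k A α x y) u = φ x (hmul k A α y u) ∧
      φ (hmul k A α y x) u = φ x (hmul k A α u y)

/-- **Claim 1.** If `φ : T → T*` is a `T`-bimodule isomorphism with
`φ(1_T) = (h,c)` (i.e. `φ(1_T)((b,g)) = h(b) + g(c)`), then for all `a, b ∈ A` and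
`f, g ∈ A*`: `α(a⊗b)(c) − α(b⊗a)(c) + h(ab − ba) = 0`, `f(bc) = f(cb)`, `g(ac) = g(ca)`. -/
theorem claim_one
    (k : Type*) [Field k] (A : Type*) [Ring A] [Algebra k A] [FiniteDimensional k A]
    (α : A →ₗ[k] A →ₗ[k] Module.Dual k A) (hα : IsCocycle k A α)
    (φ : Ext k A ≃ₗ[k] Module.Dual k (Ext k A))
    (hφ : ∀ x y u : Ext k A,
      φ (hmul k A α x y) u = φ x (hmul k A α y u) ∧
      φ (hmul k A α y x) u = φ x (hmul k A α u y))
    (h : Module.Dual k A) (c : A)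
    (hφ1 : ∀ (b : A) (g : Module.Dual k A), φ (hone k A α) (b, g) = h b + g c) :
    (∀ a b : A, α a b c - α b a c + h (a * b - b * a) = 0) ∧
    (∀ (b : A) (f : Module.Dual k A), f (b * c) = f (c * b)) ∧
    (∀ (a : A) (g : Module.Dual k A), g (a * c) = g (c * a)) := by
  -- cocycle consequences at 1
  have h1d : ∀ d x : A, α 1 d x = α 1 1 (d * x) := by
    intro d x
    have := hα 1 1 d x
    simp only [one_mul, mul_one] at this
    linear_combination this
  have ha1 : ∀ a x : A, α a 1 x = α 1 1 (x * a) := by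
    intro a x
    have := hα a 1 1 x
    simp only [one_mul, mul_one] at this
    linear_combination -this
  -- hone is a two-sided unit for hmul
  have hLeft : ∀ y : Ext k A, hmul k A α (hone k A α) y = y := by
    intro y
    refine Prod.ext (by simp [hmul, hone]) ?_
    apply LinearMap.ext; intro x
    simp [hmul, hone, h1d y.1 x, mul_comm]
  have hRight : ∀ y : Ext k A, hmul k A α y (hone k A α) = y := by
    intro y
    refine Prod.ext (by simp [hmul, hone]) ?_
    apply LinearMap.ext; intro x
    simp [hmul, hone, ha1 y.1 x]
  -- symmetry of φ(1) ∘ hmul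
  have key : ∀ p q : Ext k A,
      φ (hone k A α) (hmul k A α p q) = φ (hone k A α) (hmul k A α q p) := by
    intro p q
    have h1 := (hφ (hone k A α) p q).1
    have h2 := (hφ (hone k A α) p q).2
    rw [hLeft p] at h1
    rw [hRight p] at h2
    rw [← h1, ← h2]
  -- evaluate the key identity
  have main : ∀ (a b : A) (f g : Module.Dual k A),
      h (a * b) + (g (c * a) + f (b * c) + α a b c) =
      h (b * a) + (f (c * b) + g (a * c) + α b a c) := by
    intro a b f g
    have := key (a, f) (b, g)
    simpa [hmul, hφ1] using this
  refine ⟨?_, ?_, ?_⟩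
  · intro a b
    have := main a b 0 0
    simp only [LinearMap.zero_apply, map_sub] at this ⊢
    linear_combination this
  · intro b f
    have := main 0 b f 0
    simpa using this
  · intro a g
    have := main a 0 0 g
    have := this.symm
    simpa using this

end HochschildExtension
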